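/- Removing a degree-2 inner vertex whose neighbors are adjacent from an HVG yields an HVG: if G ∈ 𝒢_N (resp. 𝒢_{N,≠}), N ≥ 3, and 2 ≤ i ≤ N-1 with deg_G(i) = 2 and (i-1)(i+1) ∈ E(G), and D realizes G, then the sequence D[i] obtained by deleting the i-th entry of D realizes G \ {i} (after relabelling vertices i+1,...,N by i,...,N-1). In particular G \ {i} ∈ 𝒢_{N-1} (resp. 𝒢_{N-1,≠}). -/

import Mathlib

/-- The horizontal visibility graph of a data sequence `D : Fin N → ℝ`:
vertices `i ≠ j` are adjacent iff every entry strictly between them is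
smaller than both `D i` and `D j`. -/
def HVG {N : ℕ} (D : Fin N → ℝ) : SimpleGraph (Fin N) where
  Adj i j := i ≠ j ∧ ∀ k : Fin N, min i j < k → k < max i j → D k < D i ∧ D k < D j
  symm := by
    constructor
    intro i j h
    refine ⟨h.1.symm, fun k hk1 hk2 => ?_⟩
    rw [min_comm j i] at hk1
    rw [max_comm j i] at hk2
    exact (h.2 k hk1 hk2).symm
  loopless := by constructor; intro i h; exact h.1 rfl

/-- The set of HVGs on `N` vertices (arbitrary non-negative data sequences). -/
def HVGs (N : ℕ) : Set (SimpleGraph (Fin N)) :=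
  {G | ∃ D : Fin N → ℝ, (∀ i, 0 ≤ D i) ∧ HVG D = G}

/-- The set of HVGs on `N` vertices realizable by data sequences with pairwise
distinct entries. -/
def HVGsDistinct (N : ℕ) : Set (SimpleGraph (Fin N)) :=
  {G | ∃ D : Fin N → ℝ, Function.Injective D ∧ HVG D = G}

/-- A vertex `i` is non-nested in `G` if there is no edge `uv` with `u < i < v`. -/
def Nonnested {N : ℕ} (G : SimpleGraph (Fin N)) (i : Fin N) : Prop :=
  ¬ ∃ u v : Fin N, u < i ∧ i < v ∧ G.Adj u v

/-- The order-preserving injection `Fin (N-1) → Fin N` skipping the vertex `p`. -/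
def skipMap (N : ℕ) (p : Fin N) (a : Fin (N - 1)) : Fin N :=
  if a.val < p.val then ⟨a.val, by have := a.isLt; omega⟩
  else ⟨a.val + 1, by have := a.isLt; omega⟩

/-!
The edge `(p - 1)(p + 1)` makes `p` a strict local minimum of `D`. Deleting `p` only matters for
pairs `a < p < b` of remaining vertices, and for them `D p` is never an obstruction: if `a` and
`b` see each other over the remaining entries, then `D (p - 1) ≤ D a` and `D (p + 1) ≤ D b`, so
`D p` lies below both.
-/

theorem SimpleGraph.ext_of_lt {V : Type*} [LinearOrder V] {G H : SimpleGraph V}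
    (h : ∀ a b, a < b → (G.Adj a b ↔ H.Adj a b)) : G = H := by
  ext a b
  rcases lt_trichotomy a b with hab | rfl | hab
  · exact h a b hab
  · simp
  · rw [G.adj_comm, H.adj_comm]
    exact h b a hab

section HVG

variable {N : ℕ} (D : Fin N → ℝ)

theorem hvg_adj_iff_of_lt {i j : Fin N} (hij : i < j) :
    (HVG D).Adj i j ↔ ∀ k, i < k → k < j → D k < D i ∧ D k < D j := by
  change (i ≠ j ∧ ∀ k, min i j < k → k < max i j → _) ↔ _
  rw [min_eq_left hij.le, max_eq_right hij.le]
  exact ⟨And.right, fun h => ⟨hij.ne, h⟩⟩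

variable {D}

theorem le_left_of_hvg_adj {a b c : Fin N} (h : (HVG D).Adj a b) (hac : a ≤ c) (hcb : c < b) :
    D c ≤ D a := by
  obtain rfl | hac := hac.eq_or_lt
  · exact le_rfl
  · exact ((hvg_adj_iff_of_lt D (hac.trans hcb)).1 h c hac hcb).1.le

theorem le_right_of_hvg_adj {a b c : Fin N} (h : (HVG D).Adj a b) (hac : a < c) (hcb : c ≤ b) :
    D c ≤ D b := by
  obtain rfl | hcb := hcb.eq_or_lt
  · exact le_rfl
  · exact ((hvg_adj_iff_of_lt D (hac.trans hcb)).1 h c hac hcb).2.le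

end HVG

section skipMap

variable (N : ℕ) (p : Fin N)

theorem skipMap_val (a : Fin (N - 1)) :
    (skipMap N p a).val = if a.val < p.val then a.val else a.val + 1 := by
  unfold skipMap
  split <;> rfl

theorem skipMap_strictMono : StrictMono (skipMap N p) := by
  intro a b hab
  rw [Fin.lt_def, skipMap_val, skipMap_val]
  have : a.val < b.val := hab
  split <;> split <;> omega

variable {N p}

theorem exists_skipMap_eq {k : Fin N} (hk : k ≠ p) : ∃ a, skipMap N p a = k := by
  have hkp : k.val ≠ p.val := Fin.val_ne_of_ne hk
  by_cases hlt : k.val < p.val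
  · exact ⟨⟨k.val, by omega⟩, Fin.ext (by rw [skipMap_val, if_pos hlt])⟩
  · exact ⟨⟨k.val - 1, by omega⟩, Fin.ext (by simp only [skipMap_val]; split <;> omega)⟩

end skipMap

variable {N : ℕ} {D : Fin N → ℝ} {p : Fin N}

theorem lt_of_hvg_comp_skipMap_adj {l r : Fin N} (hl : l.val + 1 = p.val) (hr : p.val + 1 = r.val)
    (hlo : D p < D l) (hhi : D p < D r) {a b : Fin (N - 1)}
    (h : (HVG (D ∘ skipMap N p)).Adj a b) (hap : skipMap N p a < p) (hpb : p < skipMap N p b) :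
    D p < D (skipMap N p a) ∧ D p < D (skipMap N p b) := by
  have hs := skipMap_strictMono N p
  rw [Fin.lt_def] at hap hpb
  obtain ⟨l', rfl⟩ := exists_skipMap_eq (p := p) (k := l) (Fin.ne_of_val_ne (by omega))
  obtain ⟨r', rfl⟩ := exists_skipMap_eq (p := p) (k := r) (Fin.ne_of_val_ne (by omega))
  have hal : a ≤ l' := hs.le_iff_le.1 (Fin.le_def.2 (by omega))
  have hlb : l' < b := hs.lt_iff_lt.1 (Fin.lt_def.2 (by omega))
  have har : a < r' := hs.lt_iff_lt.1 (Fin.lt_def.2 (by omega))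
  have hrb : r' ≤ b := hs.le_iff_le.1 (Fin.le_def.2 (by omega))
  exact ⟨hlo.trans_le (le_left_of_hvg_adj (D := D ∘ skipMap N p) h hal hlb),
    hhi.trans_le (le_right_of_hvg_adj (D := D ∘ skipMap N p) h har hrb)⟩

theorem hvg_comp_skipMap {l r : Fin N} (hl : l.val + 1 = p.val) (hr : p.val + 1 = r.val)
    (hlo : D p < D l) (hhi : D p < D r) :
    HVG (D ∘ skipMap N p) = (HVG D).comap (skipMap N p) := by
  have hs := skipMap_strictMono N p
  refine SimpleGraph.ext_of_lt fun a b hab => ?_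
  rw [SimpleGraph.comap_adj, hvg_adj_iff_of_lt D (hs hab)]
  constructor
  · intro h k hak hkb
    obtain rfl | hkp := eq_or_ne k p
    · exact lt_of_hvg_comp_skipMap_adj hl hr hlo hhi h hak hkb
    · obtain ⟨c, rfl⟩ := exists_skipMap_eq hkp
      exact (hvg_adj_iff_of_lt _ hab).1 h c (hs.lt_iff_lt.1 hak) (hs.lt_iff_lt.1 hkb)
  · intro h
    exact (hvg_adj_iff_of_lt _ hab).2 fun c hac hcb => h (skipMap N p c) (hs hac) (hs hcb)

/-- if `D` realizes `G`, `i` is an inner vertex of degree `2`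
whose neighbors `i-1` and `i+1` are adjacent, then deleting the `i`-th entry
of `D` realizes the vertex deletion `G \ {i}` (relabelled); in particular
`G \ {i} ∈ 𝒢_{N-1}`, resp. `𝒢_{N-1,≠}` when the entries of `D` are distinct. -/
theorem hvg_delete_vertex (N : ℕ) (D : Fin N → ℝ)
    (hpos : ∀ v, 0 ≤ D v) (p : Fin N) (hp1 : 1 ≤ p.val) (hp2 : p.val + 1 < N)
    (hadj : (HVG D).Adj ⟨p.val - 1, by omega⟩ ⟨p.val + 1, hp2⟩) :
    HVG (fun a : Fin (N - 1) => D (skipMap N p a))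
      = (HVG D).comap (skipMap N p) ∧
    (HVG D).comap (skipMap N p) ∈ HVGs (N - 1) ∧
    (Function.Injective D → (HVG D).comap (skipMap N p) ∈ HVGsDistinct (N - 1)) := by
  obtain ⟨hlo, hhi⟩ := (hvg_adj_iff_of_lt D (Fin.mk_lt_mk.2 (by omega))).1 hadj p
    (Fin.lt_def.2 (by simp only; omega)) (Fin.lt_def.2 (by simp only; omega))
  have heq := hvg_comp_skipMap (by simp only; omega) rfl hlo hhi
  exact ⟨heq, ⟨_, fun _ => hpos _, heq⟩,
    fun hD => ⟨_, hD.comp (skipMap_strictMono N p).injective, heq⟩⟩
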